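/- Let K be a proper convex cone in ℝ^d and let 𝒦 := j(F^K_cconv(ℝ^d)) ⊆ L^p((0,1] × S^{d-1}), 1 ≤ p < ∞. Then 𝒦 ⊆ j(F_cconv(ℝ^d)) and 𝒦 is a proper convex cone in the Banach space L^p((0,1] × S^{d-1}): 𝒦 is closed under addition and under multiplication by positive scalars, and if f ∈ 𝒦 and −f ∈ 𝒦 then f = 0. -/

import Mathlib

open scoped Pointwise ENNReal
open MeasureTheory Metric Set Filter

noncomputable section

/-- A `d`-dimensional fuzzy vector, identified with its characterizing function
`ξ : ℝ^d → [0,1]`: every `α`-cut (`α ∈ (0,1]`) is nonempty, compact and convex,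
and the support (the closure of `{ξ > 0}`) is compact and convex. -/
structure FuzzyVector (d : ℕ) : Type where
  xi : EuclideanSpace ℝ (Fin d) → ℝ
  xi_mem : ∀ v, xi v ∈ Set.Icc (0 : ℝ) 1
  cut_nonempty : ∀ α ∈ Set.Ioc (0 : ℝ) 1, {v | α ≤ xi v}.Nonempty
  cut_compact : ∀ α ∈ Set.Ioc (0 : ℝ) 1, IsCompact {v | α ≤ xi v}
  cut_convex : ∀ α ∈ Set.Ioc (0 : ℝ) 1, Convex ℝ {v | α ≤ xi v}
  supp_compact : IsCompact (closure {v | 0 < xi v})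
  supp_convex : Convex ℝ (closure {v | 0 < xi v})

namespace FuzzyVector

variable {d : ℕ}

/-- The `α`-cut `C_α(x*) = {v : α ≤ ξ(v)}` of a fuzzy vector. -/
def cut (x : FuzzyVector d) (α : ℝ) : Set (EuclideanSpace ℝ (Fin d)) :=
  {v | α ≤ x.xi v}

/-- The support function `s_{x*}(α, u) = sup_{a ∈ C_α(x*)} ⟪u, a⟫`. -/
def suppFn (x : FuzzyVector d) (α : ℝ) (u : EuclideanSpace ℝ (Fin d)) : ℝ :=
  sSup ((fun a => (inner ℝ u a : ℝ)) '' x.cut α)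

/-- `z = x ⊕ y`: the fuzzy sum, determined levelwise by Minkowski sums of `α`-cuts. -/
def IsSum (x y z : FuzzyVector d) : Prop :=
  ∀ α ∈ Set.Ioc (0 : ℝ) 1, z.cut α = x.cut α + y.cut α

/-- `z = c ⊙ x`: scalar multiplication of a fuzzy vector, determined levelwise. -/
def IsSmul (c : ℝ) (x z : FuzzyVector d) : Prop :=
  ∀ α ∈ Set.Ioc (0 : ℝ) 1, z.cut α = c • x.cut α

end FuzzyVector

/-- The unit sphere `S^{d-1}` in `ℝ^d`. -/
abbrev Sph (d : ℕ) := Metric.sphere (0 : EuclideanSpace ℝ (Fin d)) 1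

/-- The normalized surface measure on the unit sphere `S^{d-1}`. -/
def sphereMeasure (d : ℕ) : Measure (Sph d) :=
  (((volume : Measure (EuclideanSpace ℝ (Fin d))).toSphere Set.univ)⁻¹) •
    (volume : Measure (EuclideanSpace ℝ (Fin d))).toSphere

/-- Lebesgue measure on `(0,1]` times the normalized surface measure on `S^{d-1}`,
i.e. the underlying measure of `L^p((0,1] × S^{d-1})`. -/
def fmeasure (d : ℕ) : Measure (ℝ × Sph d) :=
  (volume.restrict (Set.Ioc (0 : ℝ) 1)).prod (sphereMeasure d)

/-- The function `(α, u) ↦ s_{x*}(α, u)` underlying the embedding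
`j : F_cconv(ℝ^d) → L^p((0,1] × S^{d-1})`. -/
def jfun {d : ℕ} (x : FuzzyVector d) : ℝ × Sph d → ℝ :=
  fun q => x.suppFn q.1 (q.2 : EuclideanSpace ℝ (Fin d))

/-- Membership in `F^K_cconv(ℝ^d)`: the support of the characterizing function is
contained in `K`. -/
def InFK {d : ℕ} (K : Set (EuclideanSpace ℝ (Fin d))) (x : FuzzyVector d) : Prop :=
  closure {v | 0 < x.xi v} ⊆ K

/-- The image `H = j(F_cconv(ℝ^d))` in `L^p((0,1] × S^{d-1})`. -/
def Hcone (d : ℕ) (p : ℝ) : Set (Lp ℝ (ENNReal.ofReal p) (fmeasure d)) :=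
  {f | ∃ x : FuzzyVector d, ⇑f =ᵐ[fmeasure d] jfun x}

/-- The image `𝒦 = j(F^K_cconv(ℝ^d))` in `L^p((0,1] × S^{d-1})`. -/
def Kcone (d : ℕ) (p : ℝ) (K : Set (EuclideanSpace ℝ (Fin d))) :
    Set (Lp ℝ (ENNReal.ofReal p) (fmeasure d)) :=
  {f | ∃ x : FuzzyVector d, InFK K x ∧ ⇑f =ᵐ[fmeasure d] jfun x}

/-! Both cone operations are performed levelwise. The cuts of `x ⊕ y` are the Minkowski sums
`C_α(x) + C_α(y)`; these are again left-continuous in `α` by Cantor's intersection theorem, so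
they are the cuts of a fuzzy vector, and `c ⊙ x` is `ξ_x(c⁻¹ ·)`. Support functions turn these
operations into `+` and `c ·`, and the supports stay in `K` because `K + K ⊆ K` and `c • K ⊆ K`.

For properness, `s_x + s_y = 0` a.e. gives, on almost every level `α`, `⟪u, a + b⟫ ≤ 0` for a.e.
`u ∈ S^{d-1}` and all `a ∈ C_α(x)`, `b ∈ C_α(y)`. The surface measure charges every open set,
so `a + b = 0`; then `a` and `-a = b` both lie in `K`, whence `a = 0` and `C_α(x) = {0}`. -/

lemma setOf_inv_smul {G₀ α : Type*} [GroupWithZero G₀] [MulAction G₀ α] {c : G₀} (hc : c ≠ 0)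
    (p : α → Prop) : {v | p (c⁻¹ • v)} = c • {v | p v} :=
  preimage_smul_inv₀ hc _

lemma eq_zero_of_ae_inner_nonpos {E : Type*} [NormedAddCommGroup E] [InnerProductSpace ℝ E]
    [MeasurableSpace E] {μ : Measure (sphere (0 : E) 1)} [μ.IsOpenPosMeasure] {w : E}
    (h : ∀ᵐ u : sphere (0 : E) 1 ∂μ, inner ℝ (u : E) w ≤ 0) : w = 0 := by
  by_contra hw
  have hclosed : IsClosed {u : sphere (0 : E) 1 | inner ℝ (u : E) w ≤ 0} :=
    isClosed_le (by fun_prop) continuous_const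
  have hall : {u : sphere (0 : E) 1 | inner ℝ (u : E) w ≤ 0} = univ :=
    hclosed.closure_eq ▸ (Measure.dense_of_ae h).closure_eq
  have hw' : inner ℝ (‖w‖⁻¹ • w) w ≤ 0 :=
    (eq_univ_iff_forall.mp hall) ⟨‖w‖⁻¹ • w, by simp [norm_smul, hw]⟩
  rw [real_inner_smul_left, real_inner_self_eq_norm_sq] at hw'
  have : 0 < ‖w‖ := norm_pos_iff.mpr hw
  exact hw'.not_gt (by positivity)

namespace FuzzyVector

variable {d : ℕ} (x y : FuzzyVector d)

lemma cut_anti {α β : ℝ} (h : β ≤ α) : x.cut α ⊆ x.cut β :=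
  fun _ hv => h.trans hv

lemma cut_subset_closure {α : ℝ} (hα : 0 < α) : x.cut α ⊆ closure {v | 0 < x.xi v} :=
  fun _ hv => subset_closure (hα.trans_le hv)

lemma mem_cut_of_forall_lt {α : ℝ} {v : EuclideanSpace ℝ (Fin d)}
    (h : ∀ β ∈ Ioo 0 α, v ∈ x.cut β) : v ∈ x.cut α := by
  show α ≤ x.xi v
  refine le_of_forall_lt_imp_le_of_dense fun β hβ => ?_
  rcases le_or_gt β 0 with hβ0 | hβ0
  · exact hβ0.trans (x.xi_mem v).1
  · exact h β ⟨hβ0, hβ⟩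

/-- Cantor's intersection theorem, applied to the nonempty compact sets
`{a ∈ C_β(x) : v - a ∈ C_β(y)}`, which decrease as `β ↑ α`. -/
lemma mem_cut_add_cut_of_forall_lt {α : ℝ} (hα : α ∈ Ioc 0 1) {v : EuclideanSpace ℝ (Fin d)}
    (h : ∀ β ∈ Ioo 0 α, v ∈ x.cut β + y.cut β) : v ∈ x.cut α + y.cut α := by
  have : Nonempty (Ioo 0 α) := (nonempty_Ioo.mpr hα.1).to_subtype
  let S : Ioo 0 α → Set (EuclideanSpace ℝ (Fin d)) := fun β => x.cut β ∩ (v - ·) ⁻¹' y.cut β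
  have hβ1 (β : Ioo 0 α) : (β : ℝ) ∈ Ioc 0 1 := ⟨β.2.1, β.2.2.le.trans hα.2⟩
  have hS_closed (β : Ioo 0 α) : IsClosed (S β) :=
    (x.cut_compact β (hβ1 β)).isClosed.inter
      ((y.cut_compact β (hβ1 β)).isClosed.preimage (by fun_prop))
  obtain ⟨a, ha⟩ := IsCompact.nonempty_iInter_of_directed_nonempty_isCompact_isClosed S
    (fun β γ => ⟨max β γ, inter_subset_inter (x.cut_anti (le_max_left _ _))
        (preimage_mono (y.cut_anti (le_max_left _ _))),
      inter_subset_inter (x.cut_anti (le_max_right _ _))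
        (preimage_mono (y.cut_anti (le_max_right _ _)))⟩)
    (fun β => by
      obtain ⟨a, ha, b, hb, rfl⟩ := h β β.2
      exact ⟨a, ha, by simpa using hb⟩)
    (fun β => (x.cut_compact β (hβ1 β)).of_isClosed_subset (hS_closed β) inter_subset_left)
    hS_closed
  rw [mem_iInter] at ha
  exact ⟨a, x.mem_cut_of_forall_lt fun β hβ => (ha ⟨β, hβ⟩).1,
    v - a, y.mem_cut_of_forall_lt fun β hβ => (ha ⟨β, hβ⟩).2, add_sub_cancel a v⟩

/-- `sSup ∅ = 0` makes this `0` at points lying in no `C_α(x) + C_α(y)`. -/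
def addXi (v : EuclideanSpace ℝ (Fin d)) : ℝ :=
  sSup {α | α ∈ Ioc 0 1 ∧ v ∈ x.cut α + y.cut α}

lemma le_addXi {α : ℝ} (hα : α ∈ Ioc 0 1) {v : EuclideanSpace ℝ (Fin d)}
    (hv : v ∈ x.cut α + y.cut α) : α ≤ addXi x y v :=
  le_csSup ⟨1, fun _ hβ => hβ.1.2⟩ ⟨hα, hv⟩

lemma le_addXi_iff {α : ℝ} (hα : α ∈ Ioc 0 1) {v : EuclideanSpace ℝ (Fin d)} :
    α ≤ addXi x y v ↔ v ∈ x.cut α + y.cut α := by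
  refine ⟨fun hv => mem_cut_add_cut_of_forall_lt x y hα fun β hβ => ?_, le_addXi x y hα⟩
  obtain ⟨γ, ⟨-, hγ⟩, hβγ⟩ := exists_lt_of_lt_csSup
    (nonempty_iff_ne_empty.mpr fun h => by
      rw [addXi, h, Real.sSup_empty] at hv
      exact hα.1.not_ge hv)
    (hβ.2.trans_le hv)
  exact add_subset_add (x.cut_anti hβγ.le) (y.cut_anti hβγ.le) hγ

lemma setOf_le_addXi {α : ℝ} (hα : α ∈ Ioc 0 1) :
    {v | α ≤ addXi x y v} = x.cut α + y.cut α :=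
  Set.ext fun _ => le_addXi_iff x y hα

lemma addXi_pos_iff {v : EuclideanSpace ℝ (Fin d)} :
    0 < addXi x y v ↔ ∃ α ∈ Ioc 0 1, v ∈ x.cut α + y.cut α := by
  refine ⟨fun hv => ?_, fun ⟨α, hα, hv⟩ => hα.1.trans_le (le_addXi x y hα hv)⟩
  by_contra! h
  rw [addXi, show {α | α ∈ Ioc 0 1 ∧ v ∈ x.cut α + y.cut α} = ∅ from
    eq_empty_of_forall_notMem fun α hα => h α hα.1 hα.2, Real.sSup_empty] at hv
  exact hv.false

lemma addXi_mem_Icc (v : EuclideanSpace ℝ (Fin d)) : addXi x y v ∈ Icc 0 1 :=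
  ⟨Real.sSup_nonneg fun _ hα => hα.1.1.le, Real.sSup_le (fun _ hα => hα.1.2) zero_le_one⟩

lemma setOf_addXi_pos_subset :
    {v | 0 < addXi x y v} ⊆ closure {v | 0 < x.xi v} + closure {v | 0 < y.xi v} := by
  intro v hv
  obtain ⟨α, hα, hv⟩ := (addXi_pos_iff x y).mp hv
  exact add_subset_add (x.cut_subset_closure hα.1) (y.cut_subset_closure hα.1) hv

lemma convex_setOf_addXi_pos : Convex ℝ {v | 0 < addXi x y v} := by
  intro v hv w hw s t hs ht hst
  obtain ⟨α, hα, hv⟩ := (addXi_pos_iff x y).mp hv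
  obtain ⟨β, hβ, hw⟩ := (addXi_pos_iff x y).mp hw
  have hγ : min α β ∈ Ioc 0 1 := ⟨lt_min hα.1 hβ.1, (min_le_left _ _).trans hα.2⟩
  refine (addXi_pos_iff x y).mpr
    ⟨min α β, hγ, (x.cut_convex _ hγ).add (y.cut_convex _ hγ) ?_ ?_ hs ht hst⟩
  · exact add_subset_add (x.cut_anti (min_le_left _ _)) (y.cut_anti (min_le_left _ _)) hv
  · exact add_subset_add (x.cut_anti (min_le_right _ _)) (y.cut_anti (min_le_right _ _)) hw

def add : FuzzyVector d where
  xi := addXi x y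
  xi_mem := addXi_mem_Icc x y
  cut_nonempty α hα := by
    rw [setOf_le_addXi x y hα]; exact (x.cut_nonempty α hα).add (y.cut_nonempty α hα)
  cut_compact α hα := by
    rw [setOf_le_addXi x y hα]; exact (x.cut_compact α hα).add (y.cut_compact α hα)
  cut_convex α hα := by
    rw [setOf_le_addXi x y hα]; exact (x.cut_convex α hα).add (y.cut_convex α hα)
  supp_compact :=
    (x.supp_compact.add y.supp_compact).closure_of_subset (setOf_addXi_pos_subset x y)
  supp_convex := (convex_setOf_addXi_pos x y).closure

lemma isSum_add : IsSum x y (x.add y) :=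
  fun _ hα => setOf_le_addXi x y hα

lemma closure_setOf_add_pos_subset :
    closure {v | 0 < (x.add y).xi v} ⊆ closure {v | 0 < x.xi v} + closure {v | 0 < y.xi v} :=
  closure_minimal (setOf_addXi_pos_subset x y) (x.supp_compact.add y.supp_compact).isClosed

def smul (c : ℝ) (hc : c ≠ 0) : FuzzyVector d where
  xi v := x.xi (c⁻¹ • v)
  xi_mem v := x.xi_mem _
  cut_nonempty α hα := by
    rw [setOf_inv_smul hc (α ≤ x.xi ·)]; exact (x.cut_nonempty α hα).smul_set
  cut_compact α hα := by
    rw [setOf_inv_smul hc (α ≤ x.xi ·)]; exact (x.cut_compact α hα).smul c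
  cut_convex α hα := by
    rw [setOf_inv_smul hc (α ≤ x.xi ·)]; exact (x.cut_convex α hα).smul c
  supp_compact := by
    rw [setOf_inv_smul hc (0 < x.xi ·), closure_smul₀' hc]; exact x.supp_compact.smul c
  supp_convex := by
    rw [setOf_inv_smul hc (0 < x.xi ·), closure_smul₀' hc]; exact x.supp_convex.smul c

lemma isSmul_smul (c : ℝ) (hc : c ≠ 0) : IsSmul c x (x.smul c hc) :=
  fun α _ => setOf_inv_smul hc (α ≤ x.xi ·)

lemma closure_setOf_smul_pos (c : ℝ) (hc : c ≠ 0) :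
    closure {v | 0 < (x.smul c hc).xi v} = c • closure {v | 0 < x.xi v} := by
  rw [← closure_smul₀' hc, ← setOf_inv_smul hc]
  rfl

variable {x y}

lemma suppFn_eq_sSup_innerSL (α : ℝ) (u : EuclideanSpace ℝ (Fin d)) :
    x.suppFn α u = sSup (innerSL ℝ u '' x.cut α) :=
  rfl

lemma bddAbove_innerSL_image_cut {α : ℝ} (hα : α ∈ Ioc 0 1) (u : EuclideanSpace ℝ (Fin d)) :
    BddAbove (innerSL ℝ u '' x.cut α) :=
  ((x.cut_compact α hα).image (innerSL ℝ u).continuous).bddAbove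

lemma inner_le_suppFn {α : ℝ} (hα : α ∈ Ioc 0 1) (u : EuclideanSpace ℝ (Fin d))
    {a : EuclideanSpace ℝ (Fin d)} (ha : a ∈ x.cut α) : inner ℝ u a ≤ x.suppFn α u :=
  le_csSup (bddAbove_innerSL_image_cut hα u) (mem_image_of_mem _ ha)

lemma suppFn_of_isSum {z : FuzzyVector d} (h : IsSum x y z) {α : ℝ} (hα : α ∈ Ioc 0 1)
    (u : EuclideanSpace ℝ (Fin d)) : z.suppFn α u = x.suppFn α u + y.suppFn α u := by
  simp only [suppFn_eq_sSup_innerSL, h α hα, image_add]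
  exact csSup_add ((x.cut_nonempty α hα).image _) (bddAbove_innerSL_image_cut hα u)
    ((y.cut_nonempty α hα).image _) (bddAbove_innerSL_image_cut hα u)

lemma suppFn_of_isSmul {c : ℝ} (hc : 0 ≤ c) {z : FuzzyVector d} (h : IsSmul c x z) {α : ℝ}
    (hα : α ∈ Ioc 0 1) (u : EuclideanSpace ℝ (Fin d)) : z.suppFn α u = c * x.suppFn α u := by
  rw [suppFn_eq_sSup_innerSL, suppFn_eq_sSup_innerSL, h α hα, image_smul_set,
    Real.sSup_smul_of_nonneg hc, smul_eq_mul]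

lemma suppFn_eq_zero {α : ℝ} (hα : α ∈ Ioc 0 1) (h : x.cut α ⊆ {0})
    (u : EuclideanSpace ℝ (Fin d)) : x.suppFn α u = 0 := by
  rw [suppFn, (subset_singleton_iff_eq.mp h).resolve_left (x.cut_nonempty α hα).ne_empty,
    image_singleton, csSup_singleton, inner_zero_right]

lemma cut_subset_zero_of_ae_suppFn_add_eq_zero {μ : Measure (Sph d)} [μ.IsOpenPosMeasure]
    {K : Set (EuclideanSpace ℝ (Fin d))} (hK : ∀ a, a ∈ K → -a ∈ K → a = 0)
    (hx : InFK K x) (hy : InFK K y) {α : ℝ} (hα : α ∈ Ioc 0 1)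
    (h : ∀ᵐ u : Sph d ∂μ, x.suppFn α u + y.suppFn α u = 0) : x.cut α ⊆ {0} := by
  intro a ha
  obtain ⟨b, hb⟩ := y.cut_nonempty α hα
  have hab : a + b = 0 := eq_zero_of_ae_inner_nonpos <| h.mono fun u hu => by
    rw [inner_add_right]
    linarith [inner_le_suppFn hα u ha, inner_le_suppFn hα u hb]
  refine hK a (hx (x.cut_subset_closure hα.1 ha)) ?_
  rw [neg_eq_of_add_eq_zero_right hab]
  exact hy (y.cut_subset_closure hα.1 hb)

end FuzzyVector

namespace InFK

variable {d : ℕ} {K : Set (EuclideanSpace ℝ (Fin d))} {x y : FuzzyVector d}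

lemma add (hK : K + K ⊆ K) (hx : InFK K x) (hy : InFK K y) : InFK K (x.add y) :=
  (x.closure_setOf_add_pos_subset y).trans ((add_subset_add hx hy).trans hK)

lemma smul {c : ℝ} (hc : c ≠ 0) (hK : c • K ⊆ K) (hx : InFK K x) : InFK K (x.smul c hc) :=
  (x.closure_setOf_smul_pos c hc).subset.trans ((smul_set_mono hx).trans hK)

end InFK

instance (d : ℕ) : (sphereMeasure d).IsOpenPosMeasure :=
  Measure.isOpenPosMeasure_smul _ (ENNReal.inv_ne_zero.mpr (measure_ne_top _ _))

instance (d : ℕ) : IsFiniteMeasure (sphereMeasure d) :=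
  ⟨(ENNReal.inv_mul_le_one _).trans_lt ENNReal.one_lt_top⟩

lemma ae_fst_mem_Ioc (d : ℕ) : ∀ᵐ q ∂fmeasure d, q.1 ∈ Ioc (0 : ℝ) 1 :=
  Measure.quasiMeasurePreserving_fst.ae (ae_restrict_mem measurableSet_Ioc)

section jfun

variable {d : ℕ} {x y z : FuzzyVector d}

lemma jfun_of_isSum (h : FuzzyVector.IsSum x y z) : jfun z =ᵐ[fmeasure d] jfun x + jfun y :=
  (ae_fst_mem_Ioc d).mono fun _ hq => FuzzyVector.suppFn_of_isSum h hq _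

lemma jfun_of_isSmul {c : ℝ} (hc : 0 ≤ c) (h : FuzzyVector.IsSmul c x z) :
    jfun z =ᵐ[fmeasure d] c • jfun x :=
  (ae_fst_mem_Ioc d).mono fun _ hq => FuzzyVector.suppFn_of_isSmul hc h hq _

lemma jfun_ae_eq_zero_of_add {K : Set (EuclideanSpace ℝ (Fin d))}
    (hK : ∀ a, a ∈ K → -a ∈ K → a = 0) (hx : InFK K x) (hy : InFK K y)
    (h : jfun x + jfun y =ᵐ[fmeasure d] 0) : jfun x =ᵐ[fmeasure d] 0 := by
  rw [fmeasure] at h ⊢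
  have hslice : ∀ᵐ α ∂volume.restrict (Ioc (0 : ℝ) 1), ∀ u, jfun x (α, u) = 0 := by
    filter_upwards [Measure.ae_ae_of_ae_prod h, ae_restrict_mem measurableSet_Ioc]
      with α hα hα01 u
    exact FuzzyVector.suppFn_eq_zero hα01
      (FuzzyVector.cut_subset_zero_of_ae_suppFn_add_eq_zero hK hx hy hα01 hα) _
  exact (Measure.quasiMeasurePreserving_fst.ae hslice).mono fun q hq => hq q.2

end jfun

theorem Kcone_proper_convex_cone_general {d : ℕ} (p : ℝ) (hp : 1 ≤ p)
    (K : Set (EuclideanSpace ℝ (Fin d)))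
    (hKadd : ∀ a ∈ K, ∀ b ∈ K, a + b ∈ K)
    (hKsmul : ∀ c : ℝ, 0 < c → ∀ a ∈ K, c • a ∈ K)
    (hKproper : ∀ a : EuclideanSpace ℝ (Fin d), a ∈ K → -a ∈ K → a = 0) :
    haveI : Fact (1 ≤ ENNReal.ofReal p) := ⟨ENNReal.one_le_ofReal.mpr hp⟩
    Kcone d p K ⊆ Hcone d p ∧
    (∀ f ∈ Kcone d p K, ∀ g ∈ Kcone d p K, f + g ∈ Kcone d p K) ∧
    (∀ c : ℝ, 0 < c → ∀ f ∈ Kcone d p K, c • f ∈ Kcone d p K) ∧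
    (∀ f, f ∈ Kcone d p K → -f ∈ Kcone d p K → f = 0) := by
  have : Fact (1 ≤ ENNReal.ofReal p) := ⟨ENNReal.one_le_ofReal.mpr hp⟩
  refine ⟨fun f ⟨x, _, hf⟩ => ⟨x, hf⟩, ?_, ?_, ?_⟩
  · rintro f ⟨x, hxK, hf⟩ g ⟨y, hyK, hg⟩
    refine ⟨x.add y, hxK.add (add_subset_iff.mpr hKadd) hyK, ?_⟩
    filter_upwards [Lp.coeFn_add f g, hf, hg, jfun_of_isSum (x.isSum_add y)] with _ h1 h2 h3 h4
    rw [h1, h4, Pi.add_apply, Pi.add_apply, h2, h3]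
  · rintro c hc f ⟨x, hxK, hf⟩
    refine ⟨x.smul c hc.ne', hxK.smul hc.ne' (smul_set_subset_iff.mpr (hKsmul c hc)), ?_⟩
    filter_upwards [Lp.coeFn_smul c f, hf, jfun_of_isSmul hc.le (x.isSmul_smul c hc.ne')]
      with _ h1 h2 h3
    rw [h1, h3, Pi.smul_apply, Pi.smul_apply, h2]
  · rintro f ⟨x, hxK, hf⟩ ⟨y, hyK, hg⟩
    have hsum : jfun x + jfun y =ᵐ[fmeasure d] 0 := by
      filter_upwards [hf, hg, Lp.coeFn_neg f] with q h1 h2 h3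
      rw [Pi.add_apply, ← h1, ← h2, h3, Pi.neg_apply, add_neg_cancel, Pi.zero_apply]
    exact Lp.ext (hf.trans ((jfun_ae_eq_zero_of_add hKproper hxK hyK hsum).trans
      (Lp.coeFn_zero ℝ _ _).symm))

/-- if `K` is a proper convex cone in `ℝ^d`, then
`𝒦 = j(F^K_cconv(ℝ^d)) ⊆ j(F_cconv(ℝ^d))` and `𝒦` is a proper convex cone in the
Banach space `L^p((0,1] × S^{d-1})`. -/
theorem Kcone_proper_convex_cone {d : ℕ} (hd : 1 < d) (p : ℝ) (hp : 1 ≤ p)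
    (K : Set (EuclideanSpace ℝ (Fin d)))
    (hKadd : ∀ a ∈ K, ∀ b ∈ K, a + b ∈ K)
    (hKsmul : ∀ c : ℝ, 0 < c → ∀ a ∈ K, c • a ∈ K)
    (hKproper : ∀ a : EuclideanSpace ℝ (Fin d), a ∈ K → -a ∈ K → a = 0) :
    haveI : Fact (1 ≤ ENNReal.ofReal p) := ⟨ENNReal.one_le_ofReal.mpr hp⟩
    Kcone d p K ⊆ Hcone d p ∧
    (∀ f ∈ Kcone d p K, ∀ g ∈ Kcone d p K, f + g ∈ Kcone d p K) ∧
    (∀ c : ℝ, 0 < c → ∀ f ∈ Kcone d p K, c • f ∈ Kcone d p K) ∧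
    (∀ f, f ∈ Kcone d p K → -f ∈ Kcone d p K → f = 0) :=
  Kcone_proper_convex_cone_general p hp K hKadd hKsmul hKproper
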